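/- arXiv:1104.0027 — 6 statements merged into one kernel-verified Lean document; each statement's English description precedes it below -/
import Mathlib

section
/- Let X be a locally compact, completely regular Hausdorff topological space, let X̂ be a compactification of X, let a ⊆ X, and let e be an end of a (i.e., a function assigning to each compact K ⊆ X a connected component e(K) of a \ K, such that K ⊆ K' implies e(K) ⊇ e(K')). Then the boundary ∂e = ⋂_{K compact} (closure of e(K) in X̂) \ X is non-empty. -/
/-- For a locally compact completely regular Hausdorff space `X`
(realized as a dense subset of a compactification `Xhat`), a set `a ⊆ X` and an
end `e` of `a`, the boundary `∂e = ⋂_{K compact} closure(e K) \ X` is non-empty. -/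
theorem stmt0 {Xhat : Type*} [TopologicalSpace Xhat] [CompactSpace Xhat] [T2Space Xhat]
    (X : Set Xhat) (hdense : Dense X)
    (hlc : LocallyCompactSpace X) (hreg : CompletelyRegularSpace X) (ht1 : T1Space X)
    (a : Set Xhat) (ha : a ⊆ X)
    (e : Set Xhat → Set Xhat)
    (he : ∀ K : Set Xhat, IsCompact K → K ⊆ X →
      ∃ x ∈ a \ K, e K = connectedComponentIn (a \ K) x)
    (hmono : ∀ K K' : Set Xhat, IsCompact K → K ⊆ X → IsCompact K' → K' ⊆ X →
      K ⊆ K' → e K' ⊆ e K) :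
    (⋂ K ∈ {K : Set Xhat | IsCompact K ∧ K ⊆ X}, closure (e K) \ X).Nonempty := by
  -- e K ⊆ a \ K for all admissible K
  have heK : ∀ K : Set Xhat, IsCompact K → K ⊆ X → e K ⊆ a \ K := by
    intro K hK hKX
    obtain ⟨x, hx, hEq⟩ := he K hK hKX
    rw [hEq]
    exact connectedComponentIn_subset _ _
  have heNe : ∀ K : Set Xhat, IsCompact K → K ⊆ X → (e K).Nonempty := by
    intro K hK hKX
    obtain ⟨x, hx, hEq⟩ := he K hK hKX
    exact ⟨x, hEq ▸ mem_connectedComponentIn hx⟩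
  -- index type
  let ι := {K : Set Xhat // IsCompact K ∧ K ⊆ X}
  haveI : Nonempty ι := ⟨⟨∅, isCompact_empty, Set.empty_subset _⟩⟩
  have hne : (⋂ K : ι, closure (e K.1)).Nonempty := by
    apply IsCompact.nonempty_iInter_of_directed_nonempty_isCompact_isClosed
    · intro K K'
      refine ⟨⟨K.1 ∪ K'.1, K.2.1.union K'.2.1, Set.union_subset K.2.2 K'.2.2⟩, ?_, ?_⟩
      · exact closure_mono (hmono _ _ K.2.1 K.2.2 (K.2.1.union K'.2.1)
          (Set.union_subset K.2.2 K'.2.2) Set.subset_union_left)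
      · exact closure_mono (hmono _ _ K'.2.1 K'.2.2 (K.2.1.union K'.2.1)
          (Set.union_subset K.2.2 K'.2.2) Set.subset_union_right)
    · exact fun K => (heNe K.1 K.2.1 K.2.2).closure
    · exact fun K => isClosed_closure.isCompact
    · exact fun K => isClosed_closure
  obtain ⟨z, hz⟩ := hne
  simp only [Set.mem_iInter] at hz
  refine ⟨z, ?_⟩
  -- z ∉ X : use local compactness
  have hzX : z ∉ X := by
    intro hzmem
    obtain ⟨Kn, hKn, -, hKnc⟩ := (hlc.local_compact_nhds (⟨z, hzmem⟩ : X) Set.univ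
      Filter.univ_mem)
    -- Kn is a compact nhd of z in X
    have hKimg : IsCompact ((↑) '' Kn : Set Xhat) := hKnc.image continuous_subtype_val
    have hKX : ((↑) '' Kn : Set Xhat) ⊆ X := by
      rintro _ ⟨k, -, rfl⟩; exact k.2
    -- get an open U in Xhat with z ∈ U and U ∩ X ⊆ Kn image
    obtain ⟨U, hU, hUopen, hUz⟩ := mem_nhds_iff.mp hKn
    obtain ⟨V, hVopen, hVeq⟩ := isOpen_induced_iff.mp hUopen
    have hzV : z ∈ V := by
      have : (⟨z, hzmem⟩ : X) ∈ U := hUz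
      rw [← hVeq] at this; exact this
    -- e K avoids V, contradiction with z ∈ closure (e K)
    have hzcl := hz ⟨_, hKimg, hKX⟩
    have hdisj : e ((↑) '' Kn : Set Xhat) ∩ V = ∅ := by
      apply Set.eq_empty_iff_forall_notMem.mpr
      rintro y ⟨hy, hyV⟩
      have hya := heK _ hKimg hKX hy
      have hyX : y ∈ X := ha hya.1
      have : (⟨y, hyX⟩ : X) ∈ U := by rw [← hVeq]; exact hyV
      exact hya.2 ⟨⟨y, hyX⟩, hU this, rfl⟩
    obtain ⟨y, hy⟩ := mem_closure_iff.mp hzcl V hVopen hzV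
    rw [Set.inter_comm] at hdisj
    exact absurd hy (by rw [hdisj]; exact id)
  refine Set.mem_iInter₂.mpr fun K hK => ⟨hz ⟨K, hK⟩, hzX⟩
end

section
/- Let X be a locally compact, completely regular Hausdorff space with compactification X̂, let a ⊆ X and let e be an end of a. Then the boundary ∂e of the end e is a connected subset of X̂ \ X. -/
open Set

/-- A directed intersection of nonempty compact closed connected sets in a Hausdorff
space is connected. -/
lemma isConnected_iInter_directed {α ι : Type*} [TopologicalSpace α] [T2Space α] [Nonempty ι]
    {F : ι → Set α} (hd : Directed (· ⊇ ·) F) (hn : ∀ i, (F i).Nonempty)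
    (hc : ∀ i, IsCompact (F i)) (hcl : ∀ i, IsClosed (F i))
    (hconn : ∀ i, IsPreconnected (F i)) : IsConnected (⋂ i, F i) := by
  have hCcl : IsClosed (⋂ i, F i) := isClosed_iInter hcl
  have hCne : (⋂ i, F i).Nonempty :=
    IsCompact.nonempty_iInter_of_directed_nonempty_isCompact_isClosed F hd hn hc hcl
  refine ⟨hCne, ?_⟩
  rw [isPreconnected_iff_subset_of_fully_disjoint_closed hCcl]
  intro u v hu hv hcov hdisj
  by_contra h
  push_neg at h
  obtain ⟨hnu, hnv⟩ := h
  set C := ⋂ i, F i with hC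
  have i₀ : ι := Classical.arbitrary ι
  have hCc : IsCompact C := (hc i₀).of_isClosed_subset hCcl (iInter_subset F i₀)
  have hA : IsCompact (C ∩ u) := hCc.inter_right hu
  have hB : IsCompact (C ∩ v) := hCc.inter_right hv
  have hAne : (C ∩ u).Nonempty := by
    obtain ⟨x, hxC, hxv⟩ := not_subset.mp hnv
    rcases hcov hxC with hxu | hxv'
    · exact ⟨x, hxC, hxu⟩
    · exact absurd hxv' hxv
  have hBne : (C ∩ v).Nonempty := by
    obtain ⟨x, hxC, hxu⟩ := not_subset.mp hnu
    rcases hcov hxC with hxu' | hxv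
    · exact absurd hxu' hxu
    · exact ⟨x, hxC, hxv⟩
  have hABd : Disjoint (C ∩ u) (C ∩ v) :=
    Disjoint.mono inter_subset_right inter_subset_right hdisj
  obtain ⟨U, V, hUo, hVo, hAU, hBV, hUV⟩ :=
    SeparatedNhds.of_isCompact_isCompact hA hB hABd
  have hCUV : C ⊆ U ∪ V := by
    intro x hx
    rcases hcov hx with hxu | hxv
    · exact Or.inl (hAU ⟨hx, hxu⟩)
    · exact Or.inr (hBV ⟨hx, hxv⟩)
  -- the sets F i \ (U ∪ V) form a directed family of compacts with empty intersection
  have hempty : (⋂ i, F i \ (U ∪ V)) = ∅ := by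
    apply eq_empty_of_subset_empty
    intro z hz
    have hzC : z ∈ C := mem_iInter.mpr fun i => (mem_iInter.mp hz i).1
    exact (mem_iInter.mp hz i₀).2 (hCUV hzC)
  have hex : ∃ i, F i \ (U ∪ V) = ∅ := by
    by_contra hne
    push_neg at hne
    have := IsCompact.nonempty_iInter_of_directed_nonempty_isCompact_isClosed
      (fun i => F i \ (U ∪ V))
      (fun i j => by
        obtain ⟨k, hki, hkj⟩ := hd i j
        exact ⟨k, diff_subset_diff_left hki, diff_subset_diff_left hkj⟩)
      hne
      (fun i => ((hc i).diff (hUo.union hVo)))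
      (fun i => (hcl i).sdiff (hUo.union hVo))
    rw [hempty] at this
    exact this.ne_empty rfl
  obtain ⟨i, hi⟩ := hex
  have hFiUV : F i ⊆ U ∪ V := diff_eq_empty.mp hi
  obtain ⟨x, hxC, hxu⟩ := hAne
  obtain ⟨y, hyC, hyv⟩ := hBne
  have := hconn i U V hUo hVo hFiUV
    ⟨x, iInter_subset F i hxC, hAU ⟨hxC, hxu⟩⟩
    ⟨y, iInter_subset F i hyC, hBV ⟨hyC, hyv⟩⟩
  obtain ⟨z, _, hzU, hzV⟩ := this
  exact hUV.ne_of_mem hzU hzV rfl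

/-- the boundary of an end is a connected subset of Xhat \ X. -/
theorem stmt1 {Xhat : Type*} [TopologicalSpace Xhat] [CompactSpace Xhat] [T2Space Xhat]
    (X : Set Xhat) (hdense : Dense X)
    (hlc : LocallyCompactSpace X) (hreg : CompletelyRegularSpace X) (ht1 : T1Space X)
    (a : Set Xhat) (ha : a ⊆ X)
    (e : Set Xhat → Set Xhat)
    (he : ∀ K : Set Xhat, IsCompact K → K ⊆ X →
      ∃ x ∈ a \ K, e K = connectedComponentIn (a \ K) x)
    (hmono : ∀ K Kp : Set Xhat, IsCompact K → K ⊆ X → IsCompact Kp → Kp ⊆ X →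
      K ⊆ Kp → e Kp ⊆ e K) :
    IsConnected (⋂ K ∈ {K : Set Xhat | IsCompact K ∧ K ⊆ X}, closure (e K) \ X) ∧
      (⋂ K ∈ {K : Set Xhat | IsCompact K ∧ K ⊆ X}, closure (e K) \ X) ⊆ Xᶜ := by
  -- basic properties of e K
  have hesub : ∀ K : Set Xhat, IsCompact K → K ⊆ X → e K ⊆ a \ K := by
    intro K hK hKX
    obtain ⟨x, hx, hEq⟩ := he K hK hKX
    rw [hEq]
    exact connectedComponentIn_subset _ _
  have hene : ∀ K : Set Xhat, IsCompact K → K ⊆ X → (e K).Nonempty := by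
    intro K hK hKX
    obtain ⟨x, hx, hEq⟩ := he K hK hKX
    exact ⟨x, hEq ▸ mem_connectedComponentIn hx⟩
  have heconn : ∀ K : Set Xhat, IsCompact K → K ⊆ X → IsPreconnected (e K) := by
    intro K hK hKX
    obtain ⟨x, hx, hEq⟩ := he K hK hKX
    rw [hEq]
    exact isPreconnected_connectedComponentIn
  -- no point of X lies in all the closures
  have hnotX : ∀ x ∈ X, ∃ K : Set Xhat, IsCompact K ∧ K ⊆ X ∧ x ∉ closure (e K) := by
    intro x hx
    obtain ⟨K', hK'c, hK'n⟩ := exists_compact_mem_nhds (⟨x, hx⟩ : X)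
    refine ⟨Subtype.val '' K', hK'c.image continuous_subtype_val,
      by rintro y ⟨z, _, rfl⟩; exact z.2, ?_⟩
    rw [mem_nhds_subtype] at hK'n
    obtain ⟨t, ht, htsub⟩ := hK'n
    obtain ⟨U, hUt, hUo, hxU⟩ := mem_nhds_iff.mp ht
    intro hcl
    obtain ⟨y, hyU, hye⟩ := (mem_closure_iff.mp hcl) U hUo hxU
    have hy := hesub _ (hK'c.image continuous_subtype_val)
      (by rintro y ⟨z, _, rfl⟩; exact z.2) hye
    have hyX : y ∈ X := ha hy.1
    have : (⟨y, hyX⟩ : X) ∈ K' := htsub (hUt hyU)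
    exact hy.2 ⟨⟨y, hyX⟩, this, rfl⟩
  -- rewrite the intersection
  set ι := {K : Set Xhat // IsCompact K ∧ K ⊆ X}
  haveI : Nonempty ι := ⟨⟨∅, isCompact_empty, empty_subset X⟩⟩
  have hEq : (⋂ K ∈ {K : Set Xhat | IsCompact K ∧ K ⊆ X}, closure (e K) \ X)
      = ⋂ i : ι, closure (e i.1) := by
    ext x
    constructor
    · intro hx
      rw [mem_iInter]
      rintro ⟨K, hK⟩
      exact (mem_iInter₂.mp hx K hK).1
    · intro hx
      rw [mem_iInter₂]
      intro K hK
      refine ⟨mem_iInter.mp hx ⟨K, hK⟩, fun hxX => ?_⟩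
      obtain ⟨K', hK'c, hK'X, hK'cl⟩ := hnotX x hxX
      exact hK'cl (mem_iInter.mp hx ⟨K', hK'c, hK'X⟩)
  have hsubX : (⋂ K ∈ {K : Set Xhat | IsCompact K ∧ K ⊆ X}, closure (e K) \ X) ⊆ Xᶜ := by
    intro x hx
    have := mem_iInter₂.mp hx ∅ ⟨isCompact_empty, empty_subset X⟩
    exact this.2
  refine ⟨?_, hsubX⟩
  rw [hEq]
  refine isConnected_iInter_directed (F := fun i : ι => closure (e i.1)) ?_ ?_ ?_ ?_ ?_
  · intro i j
    refine ⟨⟨i.1 ∪ j.1, i.2.1.union j.2.1, union_subset i.2.2 j.2.2⟩, ?_, ?_⟩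
    · exact closure_mono (hmono i.1 _ i.2.1 i.2.2 (i.2.1.union j.2.1)
        (union_subset i.2.2 j.2.2) subset_union_left)
    · exact closure_mono (hmono j.1 _ j.2.1 j.2.2 (i.2.1.union j.2.1)
        (union_subset i.2.2 j.2.2) subset_union_right)
  · exact fun i => (hene i.1 i.2.1 i.2.2).closure
  · exact fun i => isClosed_closure.isCompact
  · exact fun i => isClosed_closure
  · exact fun i => (heconn i.1 i.2.1 i.2.2).closure
end

section
/- Let X, X̂, a, e be as above and suppose ∂e = C ∪ D with C, D disjoint non-empty closed subsets of X̂, and U, V disjoint open sets in X̂ with C ⊆ U, D ⊆ V. Then there exists a compact set K ⊆ X such that ∂(e(K)) ⊆ U ∪ V. -/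
/-- A dense locally compact subset of a Hausdorff space is open. -/
theorem aux_dense_lc_open {Xhat : Type*} [TopologicalSpace Xhat] [T2Space Xhat]
    (X : Set Xhat) (hdense : Dense X) (hlc : LocallyCompactSpace X) : IsOpen X := by
  rw [isOpen_iff_mem_nhds]
  intro x hx
  obtain ⟨N, hNcomp, hNnhds⟩ := exists_compact_mem_nhds (⟨x, hx⟩ : X)
  obtain ⟨O, hOsub, hOopen, hxO⟩ := mem_nhds_iff.mp hNnhds
  -- O is open in the subtype; lift to an open set in Xhat
  obtain ⟨O', hO'open, rfl⟩ := isOpen_induced_iff.mp hOopen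
  have hNcomp' : IsCompact (Subtype.val '' N) := hNcomp.image continuous_subtype_val
  have hNclosed : IsClosed (Subtype.val '' N) := hNcomp'.isClosed
  have hsub : O' ∩ X ⊆ Subtype.val '' N := by
    rintro y ⟨hyO, hyX⟩
    exact ⟨⟨y, hyX⟩, hOsub hyO, rfl⟩
  have hO'sub : O' ⊆ X := by
    calc O' ⊆ closure (O' ∩ X) := hdense.open_subset_closure_inter hO'open
    _ ⊆ closure (Subtype.val '' N) := closure_mono hsub
    _ = Subtype.val '' N := hNclosed.closure_eq
    _ ⊆ X := by rintro y ⟨z, _, rfl⟩; exact z.2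
  exact mem_nhds_iff.mpr ⟨O', hO'sub, hO'open, hxO⟩

/-- if ∂e = C ∪ D with C, D disjoint non-empty closed sets and U, V disjoint
open neighbourhoods of C, D, then some compact K ⊆ X satisfies ∂(e K) ⊆ U ∪ V. -/
theorem stmt4 {Xhat : Type*} [TopologicalSpace Xhat] [CompactSpace Xhat] [T2Space Xhat]
    (X : Set Xhat) (hdense : Dense X)
    (hlc : LocallyCompactSpace X) (hreg : CompletelyRegularSpace X) (ht1 : T1Space X)
    (a : Set Xhat) (ha : a ⊆ X)
    (e : Set Xhat → Set Xhat)
    (he : ∀ K : Set Xhat, IsCompact K → K ⊆ X →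
      ∃ x ∈ a \ K, e K = connectedComponentIn (a \ K) x)
    (hmono : ∀ K Kp : Set Xhat, IsCompact K → K ⊆ X → IsCompact Kp → Kp ⊆ X →
      K ⊆ Kp → e Kp ⊆ e K)
    (C D U V : Set Xhat)
    (hC : IsClosed C) (hD : IsClosed D) (hCne : C.Nonempty) (hDne : D.Nonempty)
    (hCD : Disjoint C D)
    (hsep : (⋂ K ∈ {K : Set Xhat | IsCompact K ∧ K ⊆ X}, closure (e K) \ X) = C ∪ D)
    (hU : IsOpen U) (hV : IsOpen V) (hUV : Disjoint U V) (hCU : C ⊆ U) (hDV : D ⊆ V) :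
    ∃ K : Set Xhat, IsCompact K ∧ K ⊆ X ∧ closure (e K) \ X ⊆ U ∪ V := by
  have hXopen : IsOpen X := aux_dense_lc_open X hdense hlc
  -- the compact set T = (U ∪ V)ᶜ
  have hT : IsCompact ((U ∪ V)ᶜ) := (hU.union hV).isClosed_compl.isCompact
  set ι := {K : Set Xhat // IsCompact K ∧ K ⊆ X}
  have hcover : (U ∪ V)ᶜ ⊆ ⋃ i : ι, ((closure (e i.1))ᶜ ∪ X) := by
    intro p hp
    have hpnot : p ∉ C ∪ D := fun h => hp (h.elim (fun h => Or.inl (hCU h)) (fun h => Or.inr (hDV h)))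
    rw [← hsep] at hpnot
    simp only [Set.mem_iInter] at hpnot
    push_neg at hpnot
    obtain ⟨K, hK, hpK⟩ := hpnot
    refine Set.mem_iUnion.mpr ⟨⟨K, hK⟩, ?_⟩
    by_cases hpX : p ∈ X
    · exact Or.inr hpX
    · exact Or.inl (fun hc => hpK ⟨hc, hpX⟩)
  obtain ⟨t, ht⟩ := hT.elim_finite_subcover (fun i : ι => (closure (e i.1))ᶜ ∪ X)
    (fun i => isClosed_closure.isOpen_compl.union hXopen) hcover
  refine ⟨⋃ i ∈ t, i.1, t.finite_toSet.isCompact_biUnion (fun i _ => i.2.1), ?_, ?_⟩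
  · exact Set.iUnion₂_subset fun i _ => i.2.2
  · set K₀ := ⋃ i ∈ t, (i : ι).1 with hK₀
    have hK₀comp : IsCompact K₀ := t.finite_toSet.isCompact_biUnion (fun i _ => i.2.1)
    have hK₀sub : K₀ ⊆ X := Set.iUnion₂_subset fun i _ => i.2.2
    intro q ⟨hq, hqX⟩
    by_contra hquv
    obtain ⟨i, hit, hqi⟩ := Set.mem_iUnion₂.mp (ht hquv)
    rcases hqi with hqi | hqi
    · apply hqi
      have : e K₀ ⊆ e i.1 :=
        hmono i.1 K₀ i.2.1 i.2.2 hK₀comp hK₀sub (Set.subset_biUnion_of_mem hit)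
      exact closure_mono this hq
    · exact hqX hqi
end

section
/- Let X, X̂, a, e be as above, and let U, V be disjoint open subsets of X̂. If K ⊆ X is compact with ∂(e(K)) ⊆ U ∪ V, then K' = K ∪ (closure(e(K), X̂) \ (U ∪ V)) is a compact subset of X and e(K') ⊆ U ∪ V. -/
/-- if ∂(e K) ⊆ U ∪ V for disjoint open U, V, then
K' = K ∪ (closure(e K) \ (U ∪ V)) is a compact subset of X and e K' ⊆ U ∪ V. -/
theorem stmt5 {Xhat : Type*} [TopologicalSpace Xhat] [CompactSpace Xhat] [T2Space Xhat]
    (X : Set Xhat) (hdense : Dense X)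
    (hlc : LocallyCompactSpace X) (hreg : CompletelyRegularSpace X) (ht1 : T1Space X)
    (a : Set Xhat) (ha : a ⊆ X)
    (e : Set Xhat → Set Xhat)
    (he : ∀ K : Set Xhat, IsCompact K → K ⊆ X →
      ∃ x ∈ a \ K, e K = connectedComponentIn (a \ K) x)
    (hmono : ∀ K Kp : Set Xhat, IsCompact K → K ⊆ X → IsCompact Kp → Kp ⊆ X →
      K ⊆ Kp → e Kp ⊆ e K)
    (U V : Set Xhat) (hU : IsOpen U) (hV : IsOpen V) (hUV : Disjoint U V)
    (K : Set Xhat) (hK : IsCompact K) (hKX : K ⊆ X)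
    (hbd : closure (e K) \ X ⊆ U ∪ V) :
    IsCompact (K ∪ (closure (e K) \ (U ∪ V))) ∧
      (K ∪ (closure (e K) \ (U ∪ V))) ⊆ X ∧
      e (K ∪ (closure (e K) \ (U ∪ V))) ⊆ U ∪ V := by
  have hKp : IsCompact (K ∪ (closure (e K) \ (U ∪ V))) := by
    refine hK.union ?_
    exact (isClosed_closure.sdiff (hU.union hV)).isCompact
  have hKpX : (K ∪ (closure (e K) \ (U ∪ V))) ⊆ X := by
    rintro x (hx | ⟨hx1, hx2⟩)
    · exact hKX hx
    · by_contra hxX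
      exact hx2 (hbd ⟨hx1, hxX⟩)
  refine ⟨hKp, hKpX, ?_⟩
  obtain ⟨y, hy, hey⟩ := he _ hKp hKpX
  have hsub : e (K ∪ (closure (e K) \ (U ∪ V))) ⊆ a \ (K ∪ (closure (e K) \ (U ∪ V))) := by
    rw [hey]; exact connectedComponentIn_subset _ _
  have hmon := hmono K _ hK hKX hKp hKpX Set.subset_union_left
  intro x hx
  have hx1 : x ∈ closure (e K) := subset_closure (hmon hx)
  have hx2 := (hsub hx).2
  by_contra hxUV
  exact hx2 (Or.inr ⟨hx1, hxUV⟩)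
end

section
/- Nonamenability of locally finite connected graphs is a quasi-isometry invariant: if G and H are locally finite connected graphs with bounded vertex degrees that are quasi-isometric (as metric spaces with the graph metric) and G is nonamenable, then H is nonamenable. -/
/-!
For bounded degree, nonamenability is equivalent to uniform growth of thickenings. The isoperimetric
inequality makes every 1-thickening grow by a factor `1 + ε / (D + 1)`, so `n`-fold thickenings
grow exponentially. Conversely, if the `R`-thickening of every finite `S` has at least `2 |S|`
vertices, then its part outside `S` lies in the `R`-thickening of the outer vertex boundary, whence
`|S| ≤ (D + 1) ^ R |∂S|`.

Growth transfers along a quasi-isometry `f` with quasi-inverse `g`: the fibres of `f` and `g` have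
bounded diameter, hence bounded size. Pushing `S` to `G` by `g`, thickening `n` times there with
`n` large and mapping back by `f` yields at least `2 |S|` vertices within bounded distance of `S`.
-/

/-- A locally finite graph is nonamenable if for some ε > 0 every finite non-empty
set of vertices `V₀` satisfies `ε * |V₀| ≤ |∂V₀|`, where the edge boundary is counted
via ordered pairs (inside vertex, outside neighbour). -/
def GraphNonamenable {V : Type*} (G : SimpleGraph V) : Prop :=
  ∃ ε : ℝ, 0 < ε ∧ ∀ V₀ : Finset V, V₀.Nonempty →
    ε * (V₀.card : ℝ) ≤
      (Nat.card {p : V × V // G.Adj p.1 p.2 ∧ p.1 ∈ V₀ ∧ p.2 ∉ V₀} : ℝ)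

open Finset

namespace SimpleGraph

variable {V : Type*} (G : SimpleGraph V) [DecidableEq V] [G.LocallyFinite]

def closedNbhd (S : Finset V) : Finset V := S ∪ S.biUnion (G.neighborFinset ·)

def outerBoundary (S : Finset V) : Finset V := G.closedNbhd S \ S

def thickening (S : Finset V) (n : ℕ) : Finset V := G.closedNbhd^[n] S

def edgeBoundary (S : Finset V) : Set (V × V) := {p | G.Adj p.1 p.2 ∧ p.1 ∈ S ∧ p.2 ∉ S}

variable {G} {S T : Finset V} {D : ℕ}

lemma mem_closedNbhd {w : V} : w ∈ G.closedNbhd S ↔ w ∈ S ∨ ∃ x ∈ S, G.Adj x w := by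
  simp [closedNbhd]

lemma subset_closedNbhd : S ⊆ G.closedNbhd S := subset_union_left

lemma closedNbhd_mono (h : S ⊆ T) : G.closedNbhd S ⊆ G.closedNbhd T :=
  union_subset_union h (biUnion_subset_biUnion_of_subset_left _ h)

lemma closedNbhd_union : G.closedNbhd (S ∪ T) = G.closedNbhd S ∪ G.closedNbhd T := by
  simp only [closedNbhd, union_biUnion, union_union_union_comm]

lemma mem_outerBoundary {w : V} :
    w ∈ G.outerBoundary S ↔ w ∉ S ∧ ∃ x ∈ S, G.Adj x w := by
  simp only [outerBoundary, mem_sdiff, mem_closedNbhd]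
  tauto

lemma closedNbhd_eq_union_outerBoundary : G.closedNbhd S = S ∪ G.outerBoundary S :=
  (union_sdiff_of_subset subset_closedNbhd).symm

lemma card_closedNbhd : #(G.closedNbhd S) = #S + #(G.outerBoundary S) := by
  rw [outerBoundary, card_sdiff_of_subset subset_closedNbhd]
  have := card_le_card (subset_closedNbhd (G := G) (S := S))
  omega

lemma card_closedNbhd_le (hdeg : ∀ v, G.degree v ≤ D) : #(G.closedNbhd S) ≤ (D + 1) * #S :=
  calc #(G.closedNbhd S) ≤ #S + #(S.biUnion (G.neighborFinset ·)) := card_union_le _ _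
    _ ≤ #S + #S * D := by
      gcongr
      exact card_biUnion_le_card_mul _ _ _ fun v _ ↦
        (card_neighborFinset_eq_degree G v).trans_le (hdeg v)
    _ = (D + 1) * #S := by ring

lemma thickening_zero : G.thickening S 0 = S := rfl

lemma thickening_succ (n : ℕ) : G.thickening S (n + 1) = G.closedNbhd (G.thickening S n) :=
  Function.iterate_succ_apply' _ _ _

lemma thickening_succ' (n : ℕ) : G.thickening S (n + 1) = G.thickening (G.closedNbhd S) n :=
  Function.iterate_succ_apply _ _ _

lemma subset_thickening (n : ℕ) : S ⊆ G.thickening S n := by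
  induction n with
  | zero => rfl
  | succ n ih => exact ih.trans (by rw [thickening_succ]; exact subset_closedNbhd)

lemma thickening_mono (h : S ⊆ T) (n : ℕ) : G.thickening S n ⊆ G.thickening T n := by
  induction n with
  | zero => exact h
  | succ n ih => simpa only [thickening_succ] using closedNbhd_mono ih

lemma card_thickening_le (hdeg : ∀ v, G.degree v ≤ D) (n : ℕ) :
    #(G.thickening S n) ≤ (D + 1) ^ n * #S := by
  induction n with
  | zero => simp [thickening_zero]
  | succ n ih =>
    rw [thickening_succ, pow_succ', mul_assoc]
    exact (card_closedNbhd_le hdeg).trans (Nat.mul_le_mul_left _ ih)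

lemma thickening_subset_union_thickening_outerBoundary (n : ℕ) :
    G.thickening S n ⊆ S ∪ G.thickening (G.outerBoundary S) n := by
  induction n with
  | zero => exact subset_union_left
  | succ n ih =>
    have hout : G.outerBoundary S ⊆ G.thickening (G.outerBoundary S) (n + 1) :=
      subset_thickening _
    calc G.thickening S (n + 1) ⊆ G.closedNbhd (S ∪ G.thickening (G.outerBoundary S) n) := by
          rw [thickening_succ]; exact closedNbhd_mono ih
      _ = S ∪ G.outerBoundary S ∪ G.thickening (G.outerBoundary S) (n + 1) := by
          rw [closedNbhd_union, closedNbhd_eq_union_outerBoundary, thickening_succ]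
      _ ⊆ S ∪ G.thickening (G.outerBoundary S) (n + 1) := by
          rw [union_assoc, union_eq_right.2 hout]

lemma mem_thickening_iff {w : V} {n : ℕ} :
    w ∈ G.thickening S n ↔ ∃ s ∈ S, ∃ p : G.Walk s w, p.length ≤ n := by
  constructor
  · induction n generalizing w with
    | zero => exact fun hw ↦ ⟨w, hw, .nil, le_rfl⟩
    | succ n ih =>
      rw [thickening_succ, mem_closedNbhd]
      rintro (hw | ⟨x, hx, hxw⟩)
      · obtain ⟨s, hs, p, hp⟩ := ih hw
        exact ⟨s, hs, p, hp.trans n.le_succ⟩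
      · obtain ⟨s, hs, p, hp⟩ := ih hx
        exact ⟨s, hs, p.concat hxw, by simpa using hp⟩
  · rintro ⟨s, hs, p, hp⟩
    induction p generalizing S n with
    | nil => exact subset_thickening n hs
    | cons hsa q ih =>
      obtain ⟨m, rfl⟩ : ∃ m, n = m + 1 := Nat.exists_eq_add_one.2 (by simp at hp; omega)
      rw [thickening_succ']
      exact ih (mem_closedNbhd.2 (.inr ⟨_, hs, hsa⟩)) (by simpa using hp)

lemma Connected.mem_thickening_iff (hG : G.Connected) {w : V} {n : ℕ} :
    w ∈ G.thickening S n ↔ ∃ s ∈ S, G.dist s w ≤ n := by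
  rw [SimpleGraph.mem_thickening_iff]
  refine exists_congr fun s ↦ and_congr_right fun _ ↦
    ⟨fun ⟨p, hp⟩ ↦ (dist_le p).trans hp, fun h ↦ ?_⟩
  obtain ⟨p, hp⟩ := hG.exists_walk_length_eq_dist s w
  exact ⟨p, hp ▸ h⟩

lemma edgeBoundary_subset_biUnion_outerBoundary :
    G.edgeBoundary S ⊆
      ↑((G.outerBoundary S).biUnion fun y ↦ (G.neighborFinset y).image (·, y)) := by
  rintro ⟨x, y⟩ ⟨hxy, hx, hy⟩
  simp only [coe_biUnion, coe_image, Set.mem_iUnion, Set.mem_image, mem_coe, mem_neighborFinset]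
  exact ⟨y, mem_outerBoundary.2 ⟨hy, x, hx, hxy⟩, x, hxy.symm, rfl⟩

lemma card_edgeBoundary_le (hdeg : ∀ v, G.degree v ≤ D) :
    Nat.card (G.edgeBoundary S) ≤ #(G.outerBoundary S) * D := by
  rw [Nat.card_coe_set_eq]
  refine (Set.ncard_le_ncard edgeBoundary_subset_biUnion_outerBoundary (finite_toSet _)).trans ?_
  rw [Set.ncard_coe_finset]
  refine card_biUnion_le_card_mul _ _ _ fun y _ ↦ card_image_le.trans ?_
  exact (card_neighborFinset_eq_degree G y).trans_le (hdeg y)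

lemma card_outerBoundary_le_card_edgeBoundary :
    #(G.outerBoundary S) ≤ Nat.card (G.edgeBoundary S) := by
  rw [Nat.card_coe_set_eq, ← Set.ncard_coe_finset]
  have hfin : (G.edgeBoundary S).Finite :=
    (finite_toSet _).subset edgeBoundary_subset_biUnion_outerBoundary
  refine (Set.ncard_le_ncard ?_ (hfin.image Prod.snd)).trans (Set.ncard_image_le hfin)
  intro y hy
  obtain ⟨hy, x, hx, hxy⟩ := mem_outerBoundary.1 hy
  exact ⟨(x, y), ⟨hxy, hx, hy⟩, rfl⟩

lemma one_add_div_mul_card_le_card_closedNbhd (hdeg : ∀ v, G.degree v ≤ D) {ε : ℝ}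
    (hε : ∀ S : Finset V, S.Nonempty → ε * #S ≤ Nat.card (G.edgeBoundary S))
    (S : Finset V) :
    (1 + ε / (D + 1)) * #S ≤ #(G.closedNbhd S) := by
  rcases S.eq_empty_or_nonempty with rfl | hS
  · simp
  have hout : ε * #S ≤ #(G.outerBoundary S) * (D + 1) := by
    refine (hε S hS).trans ?_
    exact_mod_cast (card_edgeBoundary_le hdeg).trans (Nat.mul_le_mul_left _ D.le_succ)
  rw [card_closedNbhd, Nat.cast_add, add_mul, one_mul, div_mul_eq_mul_div]
  gcongr
  rwa [div_le_iff₀ (by positivity)]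

lemma pow_mul_card_le_card_thickening (hdeg : ∀ v, G.degree v ≤ D) {ε : ℝ}
    (hε₀ : 0 ≤ ε)
    (hε : ∀ S : Finset V, S.Nonempty → ε * #S ≤ Nat.card (G.edgeBoundary S))
    (S : Finset V) (n : ℕ) :
    (1 + ε / (D + 1)) ^ n * #S ≤ #(G.thickening S n) := by
  induction n with
  | zero => simp [thickening_zero]
  | succ n ih =>
    rw [thickening_succ, pow_succ', mul_assoc]
    exact (mul_le_mul_of_nonneg_left ih (by positivity)).trans
      (one_add_div_mul_card_le_card_closedNbhd hdeg hε _)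

lemma _root_.GraphNonamenable.exists_pow_mul_card_le_card_thickening (hG : GraphNonamenable G)
    (hdeg : ∀ v, G.degree v ≤ D) :
    ∃ δ > (0 : ℝ), ∀ (S : Finset V) (n : ℕ),
      (1 + δ) ^ n * #S ≤ #(G.thickening S n) := by
  obtain ⟨ε, hε₀, hε⟩ := hG
  exact ⟨ε / (D + 1), by positivity, pow_mul_card_le_card_thickening hdeg hε₀.le hε⟩

lemma graphNonamenable_of_two_mul_card_le_card_thickening (hdeg : ∀ v, G.degree v ≤ D)
    (R : ℕ)
    (hR : ∀ S : Finset V, 2 * #S ≤ #(G.thickening S R)) : GraphNonamenable G := by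
  refine ⟨1 / (D + 1) ^ R, by positivity, fun S _ ↦ ?_⟩
  have key : #S + #S ≤ #S + (D + 1) ^ R * Nat.card (G.edgeBoundary S) :=
    calc #S + #S ≤ #(G.thickening S R) := by rw [← two_mul]; exact hR S
      _ ≤ #(S ∪ G.thickening (G.outerBoundary S) R) :=
          card_le_card (thickening_subset_union_thickening_outerBoundary R)
      _ ≤ #S + #(G.thickening (G.outerBoundary S) R) := card_union_le _ _
      _ ≤ #S + (D + 1) ^ R * #(G.outerBoundary S) := by
          gcongr; exact card_thickening_le hdeg R
      _ ≤ #S + (D + 1) ^ R * Nat.card (G.edgeBoundary S) := by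
          gcongr; exact card_outerBoundary_le_card_edgeBoundary
  rw [one_div_mul_eq_div, div_le_iff₀ (by positivity), mul_comm]
  exact_mod_cast Nat.le_of_add_le_add_left key

lemma Connected.card_le_pow_mul_card_image (hG : G.Connected) (hdeg : ∀ v, G.degree v ≤ D)
    {β : Type*} [DecidableEq β] (φ : V → β) (S : Finset V) (r : ℕ)
    (hφ : ∀ a ∈ S, ∀ b ∈ S, φ a = φ b → G.dist a b ≤ r) :
    #S ≤ (D + 1) ^ r * #(S.image φ) := by
  refine card_le_mul_card_image S _ fun y hy ↦ ?_
  obtain ⟨a, ha, rfl⟩ := mem_image.1 hy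
  calc #{b ∈ S | φ b = φ a} ≤ #(G.thickening {a} r) := by
        refine card_le_card fun b hb ↦ hG.mem_thickening_iff.2 ⟨a, mem_singleton_self a, ?_⟩
        obtain ⟨hb, hab⟩ := mem_filter.1 hb
        exact hφ a ha b hb hab.symm
    _ ≤ (D + 1) ^ r := by simpa using card_thickening_le (S := {a}) hdeg r

end SimpleGraph

open SimpleGraph

section QuasiIsometry

variable {V W : Type*} {G : SimpleGraph V} {H : SimpleGraph W} [DecidableEq V] [DecidableEq W]
  {DG DH : ℕ}

lemma card_le_pow_mul_card_image_of_dist_comp_le [H.LocallyFinite] (hHconn : H.Connected)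
    (hHdeg : ∀ w, H.degree w ≤ DH) (f : V → W) (g : W → V) {B : ℝ}
    (hg : ∀ w, (H.dist (f (g w)) w : ℝ) ≤ B) (S : Finset W) :
    #S ≤ (DH + 1) ^ ⌈2 * B⌉₊ * #(S.image g) := by
  refine hHconn.card_le_pow_mul_card_image hHdeg g S _ fun a _ b _ hab ↦
    Nat.cast_le (α := ℝ).1 ?_
  have h₁ := hg a
  have h₂ := hg b
  rw [dist_comm] at h₁
  rw [← hab] at h₂
  calc (H.dist a b : ℝ) ≤ H.dist a (f (g a)) + H.dist (f (g a)) b := by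
        exact_mod_cast hHconn.dist_triangle
    _ ≤ ⌈2 * B⌉₊ := by linarith [Nat.le_ceil (2 * B)]

lemma card_le_pow_mul_card_image_of_lower_bound [G.LocallyFinite] (hGconn : G.Connected)
    (hGdeg : ∀ v, G.degree v ≤ DG) (f : V → W) {A B : ℝ} (hA : 0 < A)
    (hlower : ∀ x y, 1 / A * G.dist x y - B ≤ H.dist (f x) (f y)) (T : Finset V) :
    #T ≤ (DG + 1) ^ ⌈A * B⌉₊ * #(T.image f) := by
  refine hGconn.card_le_pow_mul_card_image hGdeg f T _ fun a _ b _ hab ↦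
    Nat.cast_le (α := ℝ).1 ?_
  have h := hlower a b
  rw [hab, dist_self, Nat.cast_zero, sub_nonpos, one_div_mul_eq_div, div_le_iff₀ hA] at h
  linarith [Nat.le_ceil (A * B)]

lemma image_thickening_image_subset_thickening [G.LocallyFinite] [H.LocallyFinite]
    (hGconn : G.Connected) (hHconn : H.Connected)
    (f : V → W) (g : W → V) {A B : ℝ} (hA : 0 < A)
    (hupper : ∀ x y, (H.dist (f x) (f y) : ℝ) ≤ A * G.dist x y + B)
    (hg : ∀ w, (H.dist (f (g w)) w : ℝ) ≤ B) (S : Finset W) (n : ℕ) :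
    (G.thickening (S.image g) n).image f ⊆ H.thickening S ⌈A * n + 2 * B⌉₊ := by
  intro w hw
  obtain ⟨v, hv, rfl⟩ := mem_image.1 hw
  obtain ⟨_, ht, htv⟩ := hGconn.mem_thickening_iff.1 hv
  obtain ⟨s, hs, rfl⟩ := mem_image.1 ht
  refine hHconn.mem_thickening_iff.2 ⟨s, hs, Nat.cast_le (α := ℝ).1 ?_⟩
  have h₁ := hg s
  have h₂ := hupper (g s) v
  rw [dist_comm] at h₁
  have h₃ : A * G.dist (g s) v ≤ A * n := by gcongr
  calc (H.dist s (f v) : ℝ) ≤ H.dist s (f (g s)) + H.dist (f (g s)) (f v) := by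
        exact_mod_cast hHconn.dist_triangle
    _ ≤ ⌈A * n + 2 * B⌉₊ := by linarith [Nat.le_ceil (A * n + 2 * B)]

lemma exists_two_mul_card_le_card_thickening_of_quasiIsometry [G.LocallyFinite] [H.LocallyFinite]
    (hGconn : G.Connected) (hHconn : H.Connected)
    (hGdeg : ∀ v, G.degree v ≤ DG) (hHdeg : ∀ w, H.degree w ≤ DH)
    (f : V → W) {A B : ℝ} (hA : 0 < A)
    (hlower : ∀ x y, 1 / A * G.dist x y - B ≤ H.dist (f x) (f y))
    (hupper : ∀ x y, (H.dist (f x) (f y) : ℝ) ≤ A * G.dist x y + B)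
    (hdense : ∀ w, ∃ x, (H.dist (f x) w : ℝ) ≤ B) {δ : ℝ} (hδ : 0 < δ)
    (hexp : ∀ (T : Finset V) (n : ℕ), (1 + δ) ^ n * #T ≤ #(G.thickening T n)) :
    ∃ R, ∀ S : Finset W, 2 * #S ≤ #(H.thickening S R) := by
  choose g hg using hdense
  set K := (DH + 1) ^ ⌈2 * B⌉₊
  set L := (DG + 1) ^ ⌈A * B⌉₊
  obtain ⟨n, hn⟩ := pow_unbounded_of_one_lt (2 * K * L : ℝ) (by linarith : 1 < 1 + δ)
  refine ⟨⌈A * n + 2 * B⌉₊, fun S ↦ ?_⟩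
  set T := S.image g
  have hS : (#S : ℝ) ≤ K * #T := by
    exact_mod_cast card_le_pow_mul_card_image_of_dist_comp_le hHconn hHdeg f g hg S
  have hT : (2 * K * L : ℝ) * #T ≤ L * #(H.thickening S ⌈A * n + 2 * B⌉₊) :=
    calc (2 * K * L : ℝ) * #T ≤ (1 + δ) ^ n * #T := by gcongr
      _ ≤ #(G.thickening T n) := hexp T n
      _ ≤ L * #((G.thickening T n).image f) := by
          exact_mod_cast card_le_pow_mul_card_image_of_lower_bound hGconn hGdeg f hA hlower _
      _ ≤ L * #(H.thickening S ⌈A * n + 2 * B⌉₊) := by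
          gcongr
          exact image_thickening_image_subset_thickening hGconn hHconn f g hA hupper hg S n
  have hL : (0 : ℝ) < L := by positivity
  have : (2 * #S : ℝ) ≤ #(H.thickening S ⌈A * n + 2 * B⌉₊) := by nlinarith
  exact_mod_cast this

end QuasiIsometry

theorem stmt7_general {V W : Type*} (G : SimpleGraph V) (H : SimpleGraph W)
    (hGconn : G.Connected) (hHconn : H.Connected)
    (hGlf : ∀ v : V, (G.neighborSet v).Finite) (hHlf : ∀ w : W, (H.neighborSet w).Finite)
    (DG DH : ℕ)
    (hGdeg : ∀ v : V, Nat.card (G.neighborSet v) ≤ DG)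
    (hHdeg : ∀ w : W, Nat.card (H.neighborSet w) ≤ DH)
    (f : V → W) (A B : ℝ) (hA : 1 ≤ A)
    (hqi_lower : ∀ x y : V, (1 / A) * (G.dist x y : ℝ) - B ≤ (H.dist (f x) (f y) : ℝ))
    (hqi_upper : ∀ x y : V, (H.dist (f x) (f y) : ℝ) ≤ A * (G.dist x y : ℝ) + B)
    (hqi_dense : ∀ w : W, ∃ x : V, (H.dist (f x) w : ℝ) ≤ B)
    (hG : GraphNonamenable G) :
    GraphNonamenable H := by
  classical
  let : G.LocallyFinite := fun v ↦ (hGlf v).fintype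
  let : H.LocallyFinite := fun w ↦ (hHlf w).fintype
  have hGdeg' (v : V) : G.degree v ≤ DG := by
    simpa only [Nat.card_eq_fintype_card, card_neighborSet_eq_degree] using hGdeg v
  have hHdeg' (w : W) : H.degree w ≤ DH := by
    simpa only [Nat.card_eq_fintype_card, card_neighborSet_eq_degree] using hHdeg w
  obtain ⟨δ, hδ, hexp⟩ := hG.exists_pow_mul_card_le_card_thickening hGdeg'
  obtain ⟨R, hR⟩ := exists_two_mul_card_le_card_thickening_of_quasiIsometry hGconn hHconn
    hGdeg' hHdeg' f (by linarith) hqi_lower hqi_upper hqi_dense hδ hexp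
  exact graphNonamenable_of_two_mul_card_le_card_thickening hHdeg' R hR

/-- nonamenability is invariant under quasi-isometry of locally finite
connected graphs with bounded degree (with the graph metric). -/
theorem stmt7 {V W : Type*} (G : SimpleGraph V) (H : SimpleGraph W)
    (hGconn : G.Connected) (hHconn : H.Connected)
    (hGlf : ∀ v : V, (G.neighborSet v).Finite) (hHlf : ∀ w : W, (H.neighborSet w).Finite)
    (DG DH : ℕ)
    (hGdeg : ∀ v : V, Nat.card (G.neighborSet v) ≤ DG)
    (hHdeg : ∀ w : W, Nat.card (H.neighborSet w) ≤ DH)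
    (f : V → W) (A B : ℝ) (hA : 1 ≤ A) (hB : 0 ≤ B)
    (hqi_lower : ∀ x y : V, (1 / A) * (G.dist x y : ℝ) - B ≤ (H.dist (f x) (f y) : ℝ))
    (hqi_upper : ∀ x y : V, (H.dist (f x) (f y) : ℝ) ≤ A * (G.dist x y : ℝ) + B)
    (hqi_dense : ∀ w : W, ∃ x : V, (H.dist (f x) w : ℝ) ≤ B)
    (hG : GraphNonamenable G) :
    GraphNonamenable H :=
  stmt7_general G H hGconn hHconn hGlf hHlf DG DH hGdeg hHdeg f A B hA hqi_lower hqi_upper hqi_dense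
    hG
end

section
/- Let X be a locally compact T_{3½} space with compactification X̂, let a ⊆ X, and let e be an end of a. Then the boundary ∂e of e is connected. -/
open Set

/-- A dense, locally compact subspace of a Hausdorff space is open. -/
lemma aux_dense_lc_isOpen {Y : Type*} [TopologicalSpace Y] [T2Space Y]
    (X : Set Y) (hdense : Dense X) (hlc : LocallyCompactSpace X) : IsOpen X := by
  rw [isOpen_iff_mem_nhds]
  intro x hx
  obtain ⟨K, hKc, hKn⟩ := exists_compact_mem_nhds (⟨x, hx⟩ : X)
  have h1 : (Subtype.val '' K) ∈ nhdsWithin x X := by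
    have h0 := Filter.image_mem_map (m := (Subtype.val : X → Y)) hKn
    rwa [map_nhds_subtype_val] at h0
  obtain ⟨O, hOopen, hxO, hOsub⟩ := mem_nhdsWithin.mp h1
  have hKcY : IsCompact (Subtype.val '' K) := hKc.image continuous_subtype_val
  have hOX : O ⊆ X := by
    intro y hy
    have h2 : y ∈ closure (O ∩ X) := hdense.open_subset_closure_inter hOopen hy
    have h3 : y ∈ closure (Subtype.val '' K) := closure_mono hOsub h2
    rw [hKcY.isClosed.closure_eq] at h3
    exact Subtype.coe_image_subset X K h3
  exact mem_nhds_iff.mpr ⟨O, hOX, hOopen, hxO⟩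

/-- a separation ∂e = C ⊎ D of the boundary of an end into non-empty
closed sets with disjoint open neighbourhoods U, V is impossible (derivation of the
contradiction via a compact K' with e K' ⊆ U ∪ V meeting both U and V); in other words,
the boundary of any end is connected. -/
theorem stmt16 {Xhat : Type*} [TopologicalSpace Xhat] [CompactSpace Xhat] [T2Space Xhat]
    (X : Set Xhat) (hdense : Dense X)
    (hlc : LocallyCompactSpace X) (hreg : CompletelyRegularSpace X) (ht1 : T1Space X)
    (a : Set Xhat) (ha : a ⊆ X)
    (e : Set Xhat → Set Xhat)
    (he : ∀ K : Set Xhat, IsCompact K → K ⊆ X →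
      ∃ x ∈ a \ K, e K = connectedComponentIn (a \ K) x)
    (hmono : ∀ K Kp : Set Xhat, IsCompact K → K ⊆ X → IsCompact Kp → Kp ⊆ X →
      K ⊆ Kp → e Kp ⊆ e K)
    (C D U V : Set Xhat)
    (hC : IsClosed C) (hD : IsClosed D) (hCne : C.Nonempty) (hDne : D.Nonempty)
    (hCD : Disjoint C D)
    (hsep : (⋂ K ∈ {K : Set Xhat | IsCompact K ∧ K ⊆ X}, closure (e K) \ X) = C ∪ D)
    (hU : IsOpen U) (hV : IsOpen V) (hUV : Disjoint U V) (hCU : C ⊆ U) (hDV : D ⊆ V) :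
    False := by
  have hXopen : IsOpen X := aux_dense_lc_isOpen X hdense hlc
  -- the boundary sets are closed
  set ι := {K : Set Xhat // IsCompact K ∧ K ⊆ X}
  have hZclosed : ∀ i : ι, IsClosed (closure (e i.1) \ X) :=
    fun i => isClosed_closure.sdiff hXopen
  have hiInter : (⋂ i : ι, closure (e i.1) \ X) = C ∪ D := by
    rw [← hsep, Set.biInter_eq_iInter]; rfl
  -- compact set outside U ∪ V
  have hScomp : IsCompact ((U ∪ V)ᶜ) := ((hU.union hV).isClosed_compl).isCompact
  have hinter_empty : (U ∪ V)ᶜ ∩ ⋂ i : ι, closure (e i.1) \ X = ∅ := by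
    rw [hiInter]
    apply eq_empty_of_forall_notMem
    rintro z ⟨hz1, hz2⟩
    exact hz1 (union_subset_union hCU hDV hz2)
  obtain ⟨t, ht⟩ := hScomp.elim_finite_subfamily_closed _ hZclosed hinter_empty
  -- K' : union of the finitely many compacts
  set K' : Set Xhat := ⋃ i ∈ t, (i : ι).1 with hK'def
  have hK'c : IsCompact K' := t.finite_toSet.isCompact_biUnion (fun i _ => i.2.1)
  have hK'X : K' ⊆ X := iUnion₂_subset fun i _ => i.2.2
  have hbd : closure (e K') \ X ⊆ U ∪ V := by
    intro z hz
    by_contra hzUV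
    have hzi : z ∈ ⋂ i ∈ t, closure (e (i : ι).1) \ X := by
      refine mem_iInter₂.mpr fun i hi => ?_
      have hsub : e K' ⊆ e i.1 :=
        hmono i.1 K' i.2.1 i.2.2 hK'c hK'X (subset_biUnion_of_mem hi)
      exact ⟨closure_mono hsub hz.1, hz.2⟩
    exact (eq_empty_iff_forall_notMem.mp ht z) ⟨hzUV, hzi⟩
  -- L : part of the closure outside U ∪ V ; it is compact and inside X
  set L : Set Xhat := closure (e K') \ (U ∪ V) with hLdef
  have hLclosed : IsClosed L := isClosed_closure.sdiff (hU.union hV)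
  have hLc : IsCompact L := hLclosed.isCompact
  have hLX : L ⊆ X := by
    rintro z ⟨hz1, hz2⟩
    by_contra hzX
    exact hz2 (hbd ⟨hz1, hzX⟩)
  set K'' : Set Xhat := K' ∪ L with hK''def
  have hK''c : IsCompact K'' := hK'c.union hLc
  have hK''X : K'' ⊆ X := union_subset hK'X hLX
  obtain ⟨x, hx, hex⟩ := he K'' hK''c hK''X
  have hconn : IsPreconnected (e K'') := by
    rw [hex]; exact isPreconnected_connectedComponentIn
  have hsub1 : e K'' ⊆ e K' :=
    hmono K' K'' hK'c hK'X hK''c hK''X subset_union_left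
  have hdisj : e K'' ⊆ a \ K'' := by
    rw [hex]; exact connectedComponentIn_subset _ _
  have hsubUV : e K'' ⊆ U ∪ V := by
    intro y hy
    by_contra hyUV
    exact (hdisj hy).2 (Or.inr ⟨subset_closure (hsub1 hy), hyUV⟩)
  have hCDcl : C ∪ D ⊆ closure (e K'') := by
    intro z hz
    rw [← hiInter] at hz
    exact (mem_iInter.mp hz ⟨K'', hK''c, hK''X⟩).1
  -- the connected set e K'' lies in U or in V, but its closure meets both
  rcases hconn.subset_or_subset hU hV hUV hsubUV with hs | hs
  · obtain ⟨d, hd⟩ := hDne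
    have hdcl : d ∈ closure (e K'') := hCDcl (Or.inr hd)
    obtain ⟨z, hzV, hze⟩ := mem_closure_iff.mp hdcl V hV (hDV hd)
    exact hUV.ne_of_mem (hs hze) hzV rfl
  · obtain ⟨c, hc⟩ := hCne
    have hccl : c ∈ closure (e K'') := hCDcl (Or.inl hc)
    obtain ⟨z, hzU, hze⟩ := mem_closure_iff.mp hccl U hU (hCU hc)
    exact hUV.ne_of_mem hzU (hs hze) rfl
end
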